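/- arXiv:1511.05444 — 8 statements merged into one kernel-verified Lean document; each statement's English description precedes it below -/
import Mathlib

section
/- Under the assumption that one of the two parties cannot receive any information about the other party's input (i.e., at least one party's output is independent of the other party's input), the success probability p = (1/2)(Pr[X = B | b' = 0] + Pr[Y = A | b' = 1]) of the two-party guessing game with uniform binary inputs A, B is at most 3/4. -/
/-- Two-party causal game: `p x y a b b'` is the conditional probability that
`R` outputs `x` and `S` outputs `y` given inputs `a` (to `R`), `b` and `b'` (to `S`).
If at least one party's output is independent of the other party's inputs,
the success probability of the guessing game is at most 3/4. -/
theorem two_party_causal_bound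
    (p : Bool → Bool → Bool → Bool → Bool → ℝ)
    (hpos : ∀ x y a b b', 0 ≤ p x y a b b')
    (hsum : ∀ a b b', ∑ x : Bool, ∑ y : Bool, p x y a b b' = 1)
    (hind :
      (∀ x a b₁ b₂ b₁' b₂', (∑ y : Bool, p x y a b₁ b₁') = ∑ y : Bool, p x y a b₂ b₂') ∨
      (∀ y b b' a₁ a₂, (∑ x : Bool, p x y a₁ b b') = ∑ x : Bool, p x y a₂ b b')) :
    (1/2) * ((1/4) * ∑ a : Bool, ∑ b : Bool, ∑ y : Bool, p b y a b false
           + (1/4) * ∑ a : Bool, ∑ b : Bool, ∑ x : Bool, p x a a b true) ≤ 3/4 := by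
  simp only [Fintype.sum_bool] at *
  rcases hind with h | h
  · linarith [hsum false false false, hsum true false false, hsum false false true, hsum true false true,
      hsum false true true, hsum true true true, hsum false true false, hsum true true false,
      h true false true false false false, h true true true false false false,
      hpos false false false false true, hpos true false false false true,
      hpos false true false true true, hpos true true false true true,
      hpos false true true false true, hpos true true true false true,
      hpos false false true true true, hpos true false true true true,
      hpos false true false false true, hpos true true false false true,
      hpos false false false true true, hpos true false false true true,
      hpos false false true false true, hpos true false true false true,
      hpos false true true true true, hpos true true true true true]
  · linarith [hsum false false true, hsum true false true, hsum false true true, hsum true true true,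
      hsum false false false, hsum true false false, hsum false true false, hsum true true false,
      h false false true true false, h true true true true false,
      hpos false false false false false, hpos false true false false false,
      hpos true false true false false, hpos true true true false false,
      hpos true false false true false, hpos true true false true false,
      hpos false false true true false, hpos false true true true false,
      hpos true false false false false, hpos true true false false false,
      hpos false false false true false, hpos false true false true false,
      hpos false false true false false, hpos false true true false false,
      hpos true false true true false, hpos true true true true false]
end

section
/- If in a three-party game with independent uniform binary inputs A, B, C and shared uniform ternary input M, at least one party's output is independent of the other parties' inputs, then the success probability p = (1/3)(Pr[X = B ⊕ C | M=0] + Pr[Y = A ⊕ C | M=1] + Pr[Z = A ⊕ B | M=2]) is at most 5/6. -/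
/-- Three-party causal game with shared ternary input `M`.
`p x y z a b c m` is the conditional probability of outputs `(x,y,z)` given
binary inputs `(a,b,c)` and shared ternary input `m`.  If at least one
party's output is independent of the other parties' inputs, the success
probability is at most 5/6. -/
theorem three_party_causal_bound
    (p : Bool → Bool → Bool → Bool → Bool → Bool → Fin 3 → ℝ)
    (hpos : ∀ x y z a b c m, 0 ≤ p x y z a b c m)
    (hsum : ∀ a b c m, ∑ x : Bool, ∑ y : Bool, ∑ z : Bool, p x y z a b c m = 1)
    (hind :
      (∀ x a b₁ c₁ b₂ c₂ m,
        (∑ y : Bool, ∑ z : Bool, p x y z a b₁ c₁ m) =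
          ∑ y : Bool, ∑ z : Bool, p x y z a b₂ c₂ m) ∨
      (∀ y b a₁ c₁ a₂ c₂ m,
        (∑ x : Bool, ∑ z : Bool, p x y z a₁ b c₁ m) =
          ∑ x : Bool, ∑ z : Bool, p x y z a₂ b c₂ m) ∨
      (∀ z c a₁ b₁ a₂ b₂ m,
        (∑ x : Bool, ∑ y : Bool, p x y z a₁ b₁ c m) =
          ∑ x : Bool, ∑ y : Bool, p x y z a₂ b₂ c m)) :
    (1/3) * ((1/8) * ∑ a : Bool, ∑ b : Bool, ∑ c : Bool,
                ∑ y : Bool, ∑ z : Bool, p (xor b c) y z a b c 0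
           + (1/8) * ∑ a : Bool, ∑ b : Bool, ∑ c : Bool,
                ∑ x : Bool, ∑ z : Bool, p x (xor a c) z a b c 1
           + (1/8) * ∑ a : Bool, ∑ b : Bool, ∑ c : Bool,
                ∑ x : Bool, ∑ y : Bool, p x y (xor a b) a b c 2) ≤ 5/6 := by
  have pX : ∀ x a b c m, (∑ y : Bool, ∑ z : Bool, p x y z a b c m) ≤ 1 := by
    intro x a b c m
    have h := hsum a b c m
    have h1 := hpos (!x) true true a b c m
    have h2 := hpos (!x) true false a b c m
    have h3 := hpos (!x) false true a b c m
    have h4 := hpos (!x) false false a b c m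
    cases x <;> simp only [Fintype.sum_bool, Bool.not_true, Bool.not_false] at * <;> linarith
  have pY : ∀ y a b c m, (∑ x : Bool, ∑ z : Bool, p x y z a b c m) ≤ 1 := by
    intro y a b c m
    have h := hsum a b c m
    have h1 := hpos true (!y) true a b c m
    have h2 := hpos true (!y) false a b c m
    have h3 := hpos false (!y) true a b c m
    have h4 := hpos false (!y) false a b c m
    cases y <;> simp only [Fintype.sum_bool, Bool.not_true, Bool.not_false] at * <;> linarith
  have pZ : ∀ z a b c m, (∑ x : Bool, ∑ y : Bool, p x y z a b c m) ≤ 1 := by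
    intro z a b c m
    have h := hsum a b c m
    have h1 := hpos true true (!z) a b c m
    have h2 := hpos true false (!z) a b c m
    have h3 := hpos false true (!z) a b c m
    have h4 := hpos false false (!z) a b c m
    cases z <;> simp only [Fintype.sum_bool, Bool.not_true, Bool.not_false] at * <;> linarith
  have B0 : (∑ a : Bool, ∑ b : Bool, ∑ c : Bool,
      ∑ y : Bool, ∑ z : Bool, p (xor b c) y z a b c 0) ≤ 8 := by
    calc (∑ a : Bool, ∑ b : Bool, ∑ c : Bool,
        ∑ y : Bool, ∑ z : Bool, p (xor b c) y z a b c 0)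
        ≤ ∑ _a : Bool, ∑ _b : Bool, ∑ _c : Bool, (1:ℝ) :=
          Finset.sum_le_sum fun a _ => Finset.sum_le_sum fun b _ =>
            Finset.sum_le_sum fun c _ => pX (xor b c) a b c 0
      _ = 8 := by simp [Fintype.sum_bool]; norm_num
  have B1 : (∑ a : Bool, ∑ b : Bool, ∑ c : Bool,
      ∑ x : Bool, ∑ z : Bool, p x (xor a c) z a b c 1) ≤ 8 := by
    calc (∑ a : Bool, ∑ b : Bool, ∑ c : Bool,
        ∑ x : Bool, ∑ z : Bool, p x (xor a c) z a b c 1)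
        ≤ ∑ _a : Bool, ∑ _b : Bool, ∑ _c : Bool, (1:ℝ) :=
          Finset.sum_le_sum fun a _ => Finset.sum_le_sum fun b _ =>
            Finset.sum_le_sum fun c _ => pY (xor a c) a b c 1
      _ = 8 := by simp [Fintype.sum_bool]; norm_num
  have B2 : (∑ a : Bool, ∑ b : Bool, ∑ c : Bool,
      ∑ x : Bool, ∑ y : Bool, p x y (xor a b) a b c 2) ≤ 8 := by
    calc (∑ a : Bool, ∑ b : Bool, ∑ c : Bool,
        ∑ x : Bool, ∑ y : Bool, p x y (xor a b) a b c 2)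
        ≤ ∑ _a : Bool, ∑ _b : Bool, ∑ _c : Bool, (1:ℝ) :=
          Finset.sum_le_sum fun a _ => Finset.sum_le_sum fun b _ =>
            Finset.sum_le_sum fun c _ => pZ (xor a b) a b c 2
      _ = 8 := by simp [Fintype.sum_bool]; norm_num
  rcases hind with hX | hY | hZ
  · have E0 : (∑ a : Bool, ∑ b : Bool, ∑ c : Bool,
        ∑ y : Bool, ∑ z : Bool, p (xor b c) y z a b c 0) = 4 := by
      have h : ∀ x a b c : Bool,
          (∑ y : Bool, ∑ z : Bool, p x y z a b c 0) =
            ∑ y : Bool, ∑ z : Bool, p x y z a false false 0 :=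
        fun x a b c => hX x a b c false false 0
      have hs : ∀ a : Bool, ∑ x : Bool, ∑ y : Bool, ∑ z : Bool, p x y z a false false 0 = 1 :=
        fun a => hsum a false false 0
      simp only [Fintype.sum_bool, Bool.xor_false, Bool.xor_true, Bool.not_true,
        Bool.not_false] at h hs ⊢
      linarith [h false false false false, h true false false true, h true false true false,
        h false false true true, h false true false false, h true true false true,
        h true true true false, h false true true true, hs false, hs true]
    linarith
  · have E1 : (∑ a : Bool, ∑ b : Bool, ∑ c : Bool,
        ∑ x : Bool, ∑ z : Bool, p x (xor a c) z a b c 1) = 4 := by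
      have h : ∀ y a b c : Bool,
          (∑ x : Bool, ∑ z : Bool, p x y z a b c 1) =
            ∑ x : Bool, ∑ z : Bool, p x y z false b false 1 :=
        fun y a b c => hY y b a c false false 1
      have hs : ∀ b : Bool, ∑ x : Bool, ∑ y : Bool, ∑ z : Bool, p x y z false b false 1 = 1 :=
        fun b => hsum false b false 1
      simp only [Fintype.sum_bool, Bool.xor_false, Bool.xor_true, Bool.not_true,
        Bool.not_false] at h hs ⊢
      linarith [h false false false false, h true false false true, h false false true false,
        h true false true true, h true true false false, h false true false true,
        h true true true false, h false true true true, hs false, hs true]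
    linarith
  · have E2 : (∑ a : Bool, ∑ b : Bool, ∑ c : Bool,
        ∑ x : Bool, ∑ y : Bool, p x y (xor a b) a b c 2) = 4 := by
      have h : ∀ z a b c : Bool,
          (∑ x : Bool, ∑ y : Bool, p x y z a b c 2) =
            ∑ x : Bool, ∑ y : Bool, p x y z false false c 2 :=
        fun z a b c => hZ z c a b false false 2
      have hs : ∀ c : Bool, ∑ x : Bool, ∑ y : Bool, ∑ z : Bool, p x y z false false c 2 = 1 :=
        fun c => hsum false false c 2
      simp only [Fintype.sum_bool, Bool.xor_false, Bool.xor_true, Bool.not_true,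
        Bool.not_false] at h hs ⊢
      linarith [h false false false false, h false false false true,
        h true false true false, h true false true true,
        h true true false false, h true true false true,
        h false true true false, h false true true true, hs false, hs true]
    linarith
end

section
/- In the three-party majority game, if party R's output X depends only on its own input A (i.e., X is a function of A alone, possibly randomized independently of B and C), then the success probability p = (1/2)(Pr[X=C, Y=A, Z=B | maj(A,B,C)=0] + Pr[X=B⊕1, Y=C⊕1, Z=A⊕1 | maj(A,B,C)=1]) is at most 3/4, where A, B, C are independent uniform bits. -/
/-- 3-bit majority. -/
def maj (a b c : Bool) : Bool := (a && b) || (a && c) || (b && c)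

/-- Majority game: if party `R`'s output `X` depends only on its own input `A`
(its marginal is a distribution `r x a` independent of `b, c`), then the
success probability is at most 3/4. -/
theorem majority_game_causal_bound
    (p : Bool → Bool → Bool → Bool → Bool → Bool → ℝ)
    (hpos : ∀ x y z a b c, 0 ≤ p x y z a b c)
    (hsum : ∀ a b c, ∑ x : Bool, ∑ y : Bool, ∑ z : Bool, p x y z a b c = 1)
    (r : Bool → Bool → ℝ)
    (hmarg : ∀ x a b c, (∑ y : Bool, ∑ z : Bool, p x y z a b c) = r x a) :
    (1/2) * ((1/4) * ∑ a : Bool, ∑ b : Bool, ∑ c : Bool,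
                (if maj a b c = false then p c a b a b c else 0)
           + (1/4) * ∑ a : Bool, ∑ b : Bool, ∑ c : Bool,
                (if maj a b c = true then p (!b) (!c) (!a) a b c else 0)) ≤ 3/4 := by
  have hple : ∀ x y z a b c, p x y z a b c ≤ r x a := by
    intro x y z a b c
    rw [← hmarg x a b c]
    have h1 := hpos x false false a b c
    have h2 := hpos x false true a b c
    have h3 := hpos x true false a b c
    have h4 := hpos x true true a b c
    cases y <;> cases z <;> simp [Fintype.sum_bool] <;> linarith
  have hrsum : ∀ a, r false a + r true a = 1 := by
    intro a
    have := hsum a false false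
    rw [Fintype.sum_bool, hmarg true a false false, hmarg false a false false] at this
    linarith
  have hr0 : ∀ x a, 0 ≤ r x a := by
    intro x a
    rw [← hmarg x a false false]
    have h1 := hpos x false false a false false
    have h2 := hpos x false true a false false
    have h3 := hpos x true false a false false
    have h4 := hpos x true true a false false
    simp [Fintype.sum_bool]; linarith
  simp only [Fintype.sum_bool, maj]
  norm_num
  have e1 := hple false false false false false false
  have e2 := hple true false false false false true
  have e3 := hple false false true false true false
  have e4 := hple false false true false true true
  have e5 := hple false true false true false false
  have e6 := hple true false false true false true
  have e7 := hple false true false true true false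
  have e8 := hple false false false true true true
  have s0 := hrsum false
  have s1 := hrsum true
  have r00 := hr0 false false
  have r10 := hr0 true false
  have r01 := hr0 false true
  have r11 := hr0 true true
  linarith
end

section
/- The function e : {0,1}^3 → {0,1}^3 defined by e(o,p,q) = ((p⊕1)·q, o·(q⊕1), (o⊕1)·p) has the property that for every triple of functions f, g, h : {0,1} → {0,1}, the composed map (k,ℓ,m) ↦ e(f(k), g(ℓ), h(m)) has exactly one fixed point. -/
/-- The non-causal classical process of the majority game, as a function. -/
def eMaj (o p q : Bool) : Bool × Bool × Bool := ((!p && q), (o && !q), (!o && p))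

/-- For every triple of local functions `f, g, h : {0,1} → {0,1}`, the map
`(k,ℓ,m) ↦ eMaj (f k) (g ℓ) (h m)` has exactly one fixed point. -/
theorem eMaj_unique_fixed_point (f g h : Bool → Bool) :
    ∃! v : Bool × Bool × Bool, eMaj (f v.1) (g v.2.1) (h v.2.2) = v := by
  have hf : f = fun b => bif b then f true else f false := by funext b; cases b <;> rfl
  have hg : g = fun b => bif b then g true else g false := by funext b; cases b <;> rfl
  have hh : h = fun b => bif b then h true else h false := by funext b; cases b <;> rfl
  rw [hf, hg, hh]
  generalize f true = a; generalize f false = b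
  generalize g true = c; generalize g false = d
  generalize h true = i; generalize h false = j
  revert a b c d i j; simp only [ExistsUnique]; decide
end

section
/- For the pair of functions e0(o,p,q) = (q, o, p) and e1(o,p,q) = (q⊕1, o⊕1, p⊕1) on {0,1}^3, for every triple of functions f, g, h : {0,1} → {0,1}, the number of fixed points of (k,ℓ,m) ↦ e0(f(k),g(ℓ),h(m)) plus the number of fixed points of (k,ℓ,m) ↦ e1(f(k),g(ℓ),h(m)) equals exactly 2. -/
/-- Cyclic identity process. -/
def e0 (o p q : Bool) : Bool × Bool × Bool := (q, o, p)

/-- Cyclic bit-flip process. -/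
def e1 (o p q : Bool) : Bool × Bool × Bool := (!q, !o, !p)

/-- For every triple of local functions the number of fixed points of the
composition with `e0` plus the number of fixed points of the composition with
`e1` equals exactly 2. -/
theorem e0_e1_fixed_points_sum (f g h : Bool → Bool) :
    (Finset.univ.filter fun v : Bool × Bool × Bool =>
        e0 (f v.1) (g v.2.1) (h v.2.2) = v).card
      + (Finset.univ.filter fun v : Bool × Bool × Bool =>
        e1 (f v.1) (g v.2.1) (h v.2.2) = v).card = 2 := by
  have hf : f = fun b => cond b (f true) (f false) := by funext b; cases b <;> rfl
  have hg : g = fun b => cond b (g true) (g false) := by funext b; cases b <;> rfl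
  have hh : h = fun b => cond b (h true) (h false) := by funext b; cases b <;> rfl
  rw [hf, hg, hh]
  generalize f true = a; generalize f false = b
  generalize g true = c; generalize g false = d
  generalize h true = i; generalize h false = j
  clear hf hg hh f g h
  revert a b c d i j
  decide
end

section
/- In the worst case, any deterministic algorithm that finds the unique fixed point of a black-box function B : Fin n → Fin n (promised to have exactly one fixed point) must make at least n − 1 queries to B. Formally: for any adaptive deterministic query strategy making at most n − 2 queries, there exist two functions B1, B2 on Fin n, each with exactly one fixed point, that agree on all queried points but have different fixed points. -/
/-- The list of points queried by an adaptive deterministic strategy `S`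
(which maps the list of answers received so far to the next query point)
when interacting with the black box `B`, after `k` queries. -/
def queries (n : ℕ) (S : List (Fin n) → Fin n) (B : Fin n → Fin n) : ℕ → List (Fin n)
  | 0 => []
  | k + 1 => queries n S B k ++ [S ((queries n S B k).map B)]

lemma queries_mono (n : ℕ) (S : List (Fin n) → Fin n) (B : Fin n → Fin n)
    {j k : ℕ} (h : j ≤ k) : ∀ q ∈ queries n S B j, q ∈ queries n S B k := by
  induction k with
  | zero =>
    interval_cases j
    intro q hq; exact hq
  | succ k ih =>
    rcases Nat.eq_or_lt_of_le h with rfl | h'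
    · intro q hq; exact hq
    · intro q hq
      simp only [queries, List.mem_append]
      exact Or.inl (ih (Nat.lt_succ_iff.mp h') q hq)

lemma queries_length (n : ℕ) (S : List (Fin n) → Fin n) (B : Fin n → Fin n)
    (k : ℕ) : (queries n S B k).length = k := by
  induction k with
  | zero => rfl
  | succ k ih => simp [queries, ih]

lemma queries_congr (n : ℕ) (S : List (Fin n) → Fin n) (B B' : Fin n → Fin n)
    (k : ℕ) (h : ∀ q ∈ queries n S B k, B q = B' q) :
    ∀ j ≤ k, queries n S B' j = queries n S B j := by
  intro j
  induction j with
  | zero => intro _; rfl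
  | succ j ih =>
    intro hj
    have hj' : j ≤ k := le_of_lt (Nat.lt_of_succ_le hj)
    have e := ih hj'
    simp only [queries, e]
    have hm : List.map B' (queries n S B j) = List.map B (queries n S B j) :=
      List.map_congr_left fun q hq => (h q (queries_mono n S B hj' q hq)).symm
    rw [hm]

/-- Any adaptive deterministic strategy making at most `n - 2` queries cannot
determine the unique fixed point: there are two black boxes, each with exactly
one fixed point, producing the same transcript and agreeing on all queried
points, but whose fixed points differ. -/
theorem fixed_point_search_lower_bound (n : ℕ) (hn : 3 ≤ n)
    (S : List (Fin n) → Fin n) (k : ℕ) (hk : k ≤ n - 2) :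
    ∃ B1 B2 : Fin n → Fin n,
      (∃! x, B1 x = x) ∧ (∃! x, B2 x = x) ∧
      queries n S B1 k = queries n S B2 k ∧
      (∀ q ∈ queries n S B1 k, B1 q = B2 q) ∧
      ∀ x1 x2, B1 x1 = x1 → B2 x2 = x2 → x1 ≠ x2 := by
  haveI : NeZero n := ⟨by omega⟩
  set B0 : Fin n → Fin n := fun x => x + 1 with hB0
  have hadd : ∀ x : Fin n, x + 1 ≠ x := by
    intro x hx
    have h1 : x + 1 = x + 0 := by rw [add_zero]; exact hx
    have h2 : (1 : Fin n) = 0 := add_left_cancel h1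
    have := Fin.one_eq_zero_iff.mp h2
    omega
  set L : List (Fin n) := queries n S B0 k with hL
  -- the complement of the queried set has at least two elements
  have hcard : 1 < (Finset.univ \ L.toFinset).card := by
    have h1 : L.toFinset.card ≤ k := by
      calc L.toFinset.card ≤ L.length := List.toFinset_card_le L
        _ = k := queries_length n S B0 k
    have h2 : (Finset.univ \ L.toFinset).card = n - L.toFinset.card := by
      rw [Finset.card_sdiff_of_subset (Finset.subset_univ _), Finset.card_univ, Fintype.card_fin]
    omega
  obtain ⟨a, ha, b, hb, hab⟩ := Finset.one_lt_card.mp hcard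
  have haL : a ∉ L := by
    simpa [Finset.mem_sdiff] using ha
  have hbL : b ∉ L := by
    simpa [Finset.mem_sdiff] using hb
  set B1 : Fin n → Fin n := fun x => if x = a then a else x + 1 with hB1
  set B2 : Fin n → Fin n := fun x => if x = b then b else x + 1 with hB2
  have hfix1 : ∀ x : Fin n, B1 x = x ↔ x = a := by
    intro x
    constructor
    · intro hx
      by_contra hxa
      simp only [hB1, if_neg hxa] at hx
      exact hadd x hx
    · intro hx; subst hx; simp [hB1]
  have hfix2 : ∀ x : Fin n, B2 x = x ↔ x = b := by
    intro x
    constructor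
    · intro hx
      by_contra hxb
      simp only [hB2, if_neg hxb] at hx
      exact hadd x hx
    · intro hx; subst hx; simp [hB2]
  have hq1 : queries n S B1 k = L := by
    refine queries_congr n S B0 B1 k ?_ k le_rfl
    intro q hq
    have : q ≠ a := fun h => haL (h ▸ hq)
    simp [hB0, hB1, this]
  have hq2 : queries n S B2 k = L := by
    refine queries_congr n S B0 B2 k ?_ k le_rfl
    intro q hq
    have : q ≠ b := fun h => hbL (h ▸ hq)
    simp [hB0, hB2, this]
  refine ⟨B1, B2, ⟨a, (hfix1 a).mpr rfl, fun y hy => (hfix1 y).mp hy⟩,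
    ⟨b, (hfix2 b).mpr rfl, fun y hy => (hfix2 y).mp hy⟩,
    hq1.trans hq2.symm, ?_, ?_⟩
  · intro q hq
    rw [hq1] at hq
    have h1 : q ≠ a := fun h => haL (h ▸ hq)
    have h2 : q ≠ b := fun h => hbL (h ▸ hq)
    simp [hB1, hB2, h1, h2]
  · intro x1 x2 h1 h2
    rw [(hfix1 x1).mp h1, (hfix2 x2).mp h2]
    exact hab
end

section
/- For two parties, every deterministic function e : O_R × O_S → I_R × I_S that has a unique fixed point under composition with every pair of local functions f : I_R → O_R, g : I_S → O_S must be causal; that is, there does not exist such an e on {0,1}^2 for which both e_1 depends on o_S and e_2 depends on o_R. -/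
private def Etab (a b c d : Bool × Bool) : Bool × Bool → Bool × Bool
  | (false, false) => a
  | (false, true) => b
  | (true, false) => c
  | (true, true) => d

private theorem Etab_key : ∀ a b c d : Bool × Bool,
    (∀ f g : Bool → Bool, ∃ v : Bool × Bool, Etab a b c d (f v.1, g v.2) = v ∧ ∀ w : Bool × Bool, Etab a b c d (f w.1, g w.2) = w → w = v) →
    (∀ oR oS oS', (Etab a b c d (oR, oS)).1 = (Etab a b c d (oR, oS')).1) ∨
    (∀ oS oR oR', (Etab a b c d (oR, oS)).2 = (Etab a b c d (oR', oS)).2) := by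
  decide

/-- Two-party deterministic processes are causal: if `e : {0,1}² → {0,1}²`
has a unique fixed point under composition with every pair of local functions,
then its first coordinate does not depend on the second argument, or its
second coordinate does not depend on the first argument. -/
theorem two_party_deterministic_process_is_causal
    (e : Bool × Bool → Bool × Bool)
    (huniq : ∀ f g : Bool → Bool, ∃! v : Bool × Bool, e (f v.1, g v.2) = v) :
    (∀ oR oS oS', (e (oR, oS)).1 = (e (oR, oS')).1) ∨
    (∀ oS oR oR', (e (oR, oS)).2 = (e (oR', oS)).2) := by
  have he : e = Etab (e (false, false)) (e (false, true)) (e (true, false)) (e (true, true)) := by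
    funext p
    rcases p with ⟨x, y⟩
    cases x <;> cases y <;> rfl
  rw [he] at huniq ⊢
  exact Etab_key _ _ _ _ huniq
end

section
/- The classical process for Game 2 given by P(i_R,i_S,i_T | o_R,o_S,o_T) = 1/2 if (i_R,i_S,i_T) = (o_T,o_R,o_S), 1/2 if (i_R,i_S,i_T) = (o_T⊕1,o_R⊕1,o_S⊕1), and 0 otherwise, satisfies the total-probability condition: for every triple of functions f, g, h : {0,1} → {0,1}, Σ_{(k,ℓ,m) ∈ {0,1}^3} P((k,ℓ,m) | (f(k),g(ℓ),h(m))) = 1. -/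
/-- The classical process for Game 2: the uniform mixture of the cyclic
identity channel and the cyclic bit-flip channel.  `P19 i o` is the
probability of environment inputs `i = (i_R, i_S, i_T)` given party outputs
`o = (o_R, o_S, o_T)`. -/
noncomputable def P19 (i o : Bool × Bool × Bool) : ℝ :=
  (if i = (o.2.2, o.1, o.2.1) then 1/2 else 0) +
  (if i = (!o.2.2, !o.1, !o.2.1) then 1/2 else 0)

/-- The total-probability condition holds for `P19`: for all local functions
`f, g, h`, the total weight on fixed points is 1. -/
theorem P19_total_probability (f g h : Bool → Bool) :
    ∑ v : Bool × Bool × Bool, P19 v (f v.1, g v.2.1, h v.2.2) = 1 := by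
  cases hf0 : f false <;> cases hf1 : f true <;>
  cases hg0 : g false <;> cases hg1 : g true <;>
  cases hh0 : h false <;> cases hh1 : h true <;>
  simp [P19, Fintype.sum_prod_type, hf0, hf1, hg0, hg1, hh0, hh1, Prod.ext_iff] <;>
  norm_num
end
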